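/- arXiv:2206.02606 — 10 statements merged into one kernel-verified Lean document; each statement's English description precedes it below -/
import Mathlib

section
/- For continuous markings m and m' of a Petri net, m continuously reaches m' if and only if there exists a positive integer b such that b·m reaches b·m' under the standard (discrete) firing semantics. -/
structure PetriNet (P T : Type) [Fintype P] [Fintype T] where
  pre : T → P → ℕ
  post : T → P → ℕ

variable {P T : Type} [Fintype P] [Fintype T] [DecidableEq P]

namespace PetriNet

def enabled (N : PetriNet P T) (t : T) (m : P → ℕ) : Prop := ∀ p, N.pre t p ≤ m p

def fires (N : PetriNet P T) (m m' : P → ℕ) : Prop :=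
  ∃ t, N.enabled t m ∧ ∀ p, m' p = m p + N.post t p - N.pre t p

def reach (N : PetriNet P T) : (P → ℕ) → (P → ℕ) → Prop := Relation.ReflTransGen N.fires

def zfires (N : PetriNet P T) (m m' : P → ℤ) : Prop :=
  ∃ t, ∀ p, m' p = m p + (N.post t p : ℤ) - (N.pre t p : ℤ)

def zreach (N : PetriNet P T) : (P → ℤ) → (P → ℤ) → Prop := Relation.ReflTransGen N.zfires

def cfires (N : PetriNet P T) (m m' : P → ℚ) : Prop :=
  ∃ t, ∃ l : ℚ, 0 < l ∧ l ≤ 1 ∧ (∀ p, l * (N.pre t p : ℚ) ≤ m p) ∧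
    ∀ p, m' p = m p + l * ((N.post t p : ℚ) - (N.pre t p : ℚ))

def creach (N : PetriNet P T) : (P → ℚ) → (P → ℚ) → Prop := Relation.ReflTransGen N.cfires

def bounded (N : PetriNet P T) (m : P → ℕ) : Prop :=
  ∃ b : ℕ, ∀ m', N.reach m m' → ∀ p, m' p ≤ b

def zbounded (N : PetriNet P T) (m : P → ℕ) : Prop :=
  ∃ b : ℕ, ∀ m' : P → ℤ, N.zreach (fun p => (m p : ℤ)) m' → (∀ p, 0 ≤ m' p) →
    ∀ p, m' p ≤ (b : ℤ)

def quasiLive (N : PetriNet P T) (m : P → ℕ) (t : T) : Prop :=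
  ∃ m', N.reach m m' ∧ N.enabled t m'

def live (N : PetriNet P T) (m : P → ℕ) (t : T) : Prop :=
  ∀ m', N.reach m m' → N.quasiLive m' t

def freeChoice (N : PetriNet P T) : Prop :=
  ∀ s t : T, (∀ p, N.pre s p = 0 ∨ N.pre t p = 0) ∨ N.pre s = N.pre t

def edge (N : PetriNet P T) : (P ⊕ T) → (P ⊕ T) → Prop
  | Sum.inl p, Sum.inr t => 0 < N.pre t p
  | Sum.inr t, Sum.inl p => 0 < N.post t p
  | _, _ => False

end PetriNet

/-- The marking with `k` tokens in place `p` and none elsewhere. -/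
def mk1 (p : P) (k : ℕ) : P → ℕ := fun q => if q = p then k else 0

/-- The continuous marking with `k` tokens in place `p` and none elsewhere. -/
def mkQ (p : P) (k : ℚ) : P → ℚ := fun q => if q = p then k else 0

set_option linter.unusedSectionVars false

-- helper: multifire
lemma multifire (N : PetriNet P T) (t : T) (k : ℕ) (n : P → ℕ)
    (h : ∀ p, k * N.pre t p ≤ n p) :
    N.reach n (fun p => n p + k * N.post t p - k * N.pre t p) := by
  induction k generalizing n with
  | zero =>
    have : (fun p => n p + 0 * N.post t p - 0 * N.pre t p) = n := by
      funext p; simp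
    rw [this]
    exact Relation.ReflTransGen.refl
  | succ k ih =>
    have hen : N.enabled t n := fun p => by
      have h1 := h p; rw [Nat.succ_mul] at h1; omega
    have step : N.fires n (fun p => n p + N.post t p - N.pre t p) :=
      ⟨t, hen, fun p => rfl⟩
    have h2 : ∀ p, k * N.pre t p ≤ n p + N.post t p - N.pre t p := by
      intro p; have h1 := h p; rw [Nat.succ_mul] at h1; omega
    have := ih _ h2
    have heq : (fun p => (n p + N.post t p - N.pre t p) + k * N.post t p - k * N.pre t p)
        = (fun p => n p + (k+1) * N.post t p - (k+1) * N.pre t p) := by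
      funext p; have h1 := h p; rw [Nat.succ_mul] at h1 ⊢; rw [Nat.succ_mul]; omega
    rw [heq] at this
    exact Relation.ReflTransGen.head step this

lemma reach_smul (N : PetriNet P T) (c : ℕ) {n n' : P → ℕ} (h : N.reach n n') :
    N.reach (fun p => c * n p) (fun p => c * n' p) := by
  induction h with
  | refl => exact Relation.ReflTransGen.refl
  | tail _ step ih =>
    obtain ⟨t, hen, heq⟩ := step
    rename_i b b' _
    have h1 : ∀ p, c * N.pre t p ≤ c * b p := fun p => Nat.mul_le_mul_left c (hen p)
    have := multifire N t c (fun p => c * b p) h1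
    have h2 : (fun p => c * b p + c * N.post t p - c * N.pre t p) = fun p => c * b' p := by
      funext p; rw [heq p]; have := hen p
      rw [Nat.mul_sub, Nat.mul_add]
    rw [h2] at this
    exact Relation.ReflTransGen.trans ih this

-- helper: nonneg rational with denominator dividing d
lemma nat_of_den_dvd {q : ℚ} (hq : 0 ≤ q) {d : ℕ} (hd : (q.den : ℕ) ∣ d) :
    ∃ k : ℕ, (k : ℚ) = (d : ℚ) * q := by
  obtain ⟨c, rfl⟩ := hd
  refine ⟨c * q.num.toNat, ?_⟩
  have hnum : (0:ℤ) ≤ q.num := Rat.num_nonneg.mpr hq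
  have h1 : ((q.num.toNat : ℕ) : ℚ) = (q.num : ℚ) := by
    exact_mod_cast congrArg (Int.cast : ℤ → ℚ) (Int.toNat_of_nonneg hnum)
  push_cast
  rw [h1]
  rw [← Rat.mul_den_eq_num q]
  ring

lemma reach_div (N : PetriNet P T) (b : ℕ) (hb : 0 < b) {n n' : P → ℕ}
    (h : N.reach n n') :
    N.creach (fun p => (n p : ℚ) / b) (fun p => (n' p : ℚ) / b) := by
  have hbq : (0:ℚ) < b := by exact_mod_cast hb
  induction h with
  | refl => exact Relation.ReflTransGen.refl
  | tail _ step ih =>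
    rename_i c c' _
    obtain ⟨t, hen, heq⟩ := step
    refine ih.tail ⟨t, 1/(b:ℚ), by positivity, ?_, ?_, ?_⟩
    · rw [div_le_one hbq]
      exact_mod_cast hb
    · intro p
      have h1 : (N.pre t p : ℚ) ≤ (c p : ℚ) := by exact_mod_cast hen p
      rw [one_div, inv_mul_eq_div, div_le_div_iff_of_pos_right hbq]
      exact h1
    · intro p
      have h1 : (c' p : ℚ) = (c p : ℚ) + (N.post t p : ℚ) - (N.pre t p : ℚ) := by
        rw [heq p]
        have := hen p
        push_cast [Nat.cast_sub (by omega : N.pre t p ≤ c p + N.post t p)]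
        ring
      dsimp only
      rw [h1]; field_simp; ring

lemma forward_dir (N : PetriNet P T) {m m' : P → ℚ} (hm' : ∀ p, 0 ≤ m' p)
    (h : N.creach m m') :
    (∀ p, 0 ≤ m p) → ∃ b : ℕ, 0 < b ∧ ∃ n n' : P → ℕ,
        (∀ p, (n p : ℚ) = (b : ℚ) * m p) ∧ (∀ p, (n' p : ℚ) = (b : ℚ) * m' p) ∧
        N.reach n n' := by
  induction h using Relation.ReflTransGen.head_induction_on with
  | refl =>
    intro _
    set D : ℕ := ∏ p, (m' p).den with hD
    have hDpos : 0 < D := Finset.prod_pos (fun p _ => (m' p).pos)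
    have hdvd : ∀ p, (m' p).den ∣ D := fun p => Finset.dvd_prod_of_mem _ (Finset.mem_univ p)
    choose n hn using fun p => nat_of_den_dvd (hm' p) (hdvd p)
    exact ⟨D, hDpos, n, n, hn, hn, Relation.ReflTransGen.refl⟩
  | head step _ ih =>
    rename_i a c _
    intro hma
    obtain ⟨t, l, hl0, hl1, hen, heff⟩ := step
    have hc : ∀ p, 0 ≤ c p := by
      intro p
      rw [heff p]
      have h1 := hen p
      have h2 : (0:ℚ) ≤ (N.post t p : ℚ) := Nat.cast_nonneg _
      nlinarith
    obtain ⟨b₁, hb₁, n₁, n'₁, hn₁, hn'₁, hre⟩ := ih hc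
    set d : ℕ := l.den * ∏ p, (a p).den with hd
    have hdpos : 0 < d := Nat.mul_pos l.pos (Finset.prod_pos (fun p _ => (a p).pos))
    have hdvd : ∀ p, (a p).den ∣ d :=
      fun p => Dvd.dvd.mul_left (Finset.dvd_prod_of_mem _ (Finset.mem_univ p)) _
    choose n₀ hn₀ using fun p => nat_of_den_dvd (hma p) (hdvd p)
    obtain ⟨kl, hkl⟩ := nat_of_den_dvd hl0.le (Dvd.intro _ rfl : l.den ∣ d)
    set k : ℕ := b₁ * kl with hk
    set n : P → ℕ := fun p => b₁ * n₀ p with hnn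
    set n' : P → ℕ := fun p => d * n'₁ p with hnn'
    have hkn : ∀ p, k * N.pre t p ≤ n p := by
      intro p
      have : ((k * N.pre t p : ℕ) : ℚ) ≤ ((n p : ℕ) : ℚ) := by
        show ((b₁ * kl * N.pre t p : ℕ) : ℚ) ≤ ((b₁ * n₀ p : ℕ) : ℚ)
        push_cast
        rw [hkl, hn₀ p]
        have h1 := hen p
        nlinarith [mul_le_mul_of_nonneg_left (hen p)
          (show (0:ℚ) ≤ (b₁:ℚ) * (d:ℚ) by positivity)]
      exact_mod_cast this
    have hmid := multifire N t k n hkn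
    have hmid_eq : (fun p => n p + k * N.post t p - k * N.pre t p) = fun p => d * n₁ p := by
      funext p
      have hle : k * N.pre t p ≤ n p + k * N.post t p := le_trans (hkn p) (Nat.le_add_right _ _)
      have : ((n p + k * N.post t p - k * N.pre t p : ℕ) : ℚ) = ((d * n₁ p : ℕ) : ℚ) := by
        rw [Nat.cast_sub hle]
        simp only [hnn, hk]
        push_cast
        rw [hkl, hn₀ p, hn₁ p, heff p]
        ring
      exact_mod_cast this
    rw [hmid_eq] at hmid
    have htail := reach_smul N d hre
    refine ⟨b₁ * d, Nat.mul_pos hb₁ hdpos, n, n', ?_, ?_, hmid.trans htail⟩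
    · intro p
      show ((b₁ * n₀ p : ℕ):ℚ) = _
      push_cast
      rw [hn₀ p]; ring
    · intro p
      show ((d * n'₁ p : ℕ):ℚ) = _
      push_cast
      rw [hn'₁ p]; ring


theorem stmt0 (N : PetriNet P T) (m m' : P → ℚ)
    (hm : ∀ p, 0 ≤ m p) (hm' : ∀ p, 0 ≤ m' p) :
    N.creach m m' ↔
      ∃ b : ℕ, 0 < b ∧ ∃ n n' : P → ℕ,
        (∀ p, (n p : ℚ) = (b : ℚ) * m p) ∧ (∀ p, (n' p : ℚ) = (b : ℚ) * m' p) ∧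
        N.reach n n' := by 
  constructor
  · intro h
    exact forward_dir N hm' h hm
  · rintro ⟨b, hb, n, n', hn, hn', hre⟩
    have hbq : (0:ℚ) < b := by exact_mod_cast hb
    have h1 := reach_div N b hb hre
    have e1 : (fun p => (n p : ℚ) / b) = m := by
      funext p; rw [hn p]; field_simp
    have e2 : (fun p => (n' p : ℚ) / b) = m' := by
      funext p; rw [hn' p]; field_simp
    rwa [e1, e2] at h1
end

section
/- A marked Petri net (N, m) is integer unbounded if and only if there exists an integral marking m' > 0 such that 0 integer-reaches m'. In particular, integer unboundedness does not depend on the initial marking m. -/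
variable {P T : Type} [Fintype P] [Fintype T] [DecidableEq P]

/-! Integer reachability only sees displacements: `m ⇝_ℤ m'` iff `m' - m` lies in the additive
monoid generated by the effects `Δ(t)`, i.e. `m' = m + A x` for a Parikh vector `x ∈ ℕ^T`,
where `A x = ∑ₜ x(t) Δ(t)`.
Hence a reachable `d > 0` from `0` can be added to any marking arbitrarily often. Conversely,
infinitely many nonnegative markings `m + A x` are reachable, and Dickson's lemma on the pairs
`(x, m + A x)` yields two of them with `x ≤ x'` and `m + A x < m + A x'`; their difference
`A (x' - x)` is reachable from `0`. -/

namespace PetriNet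

section

omit [DecidableEq P]

variable (N : PetriNet P T)

def delta (t : T) : P → ℤ := fun p => (N.post t p : ℤ) - N.pre t p

def displacements : AddSubmonoid (P → ℤ) := AddSubmonoid.closure (Set.range N.delta)

theorem zreach_iff_sub_mem_displacements {a b : P → ℤ} :
    N.zreach a b ↔ b - a ∈ N.displacements := by
  constructor
  · intro h
    induction h with
    | refl => simp [N.displacements.zero_mem]
    | @tail b c _ hstep ih =>
      obtain ⟨t, ht⟩ := hstep
      have hc : c - a = (b - a) + N.delta t := by ext p; simp [delta, ht p]; ring
      exact hc ▸ add_mem ih (AddSubmonoid.subset_closure ⟨t, rfl⟩)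
  · intro h
    have translate : ∀ d ∈ N.displacements, ∀ a, N.zreach a (a + d) := by
      intro d hd
      induction hd using AddSubmonoid.closure_induction with
      | mem _ hd =>
        obtain ⟨t, rfl⟩ := hd
        exact fun a => .single ⟨t, fun p => by simp [delta]; ring⟩
      | zero => exact fun a => by simpa using .refl
      | add d e _ _ ihd ihe => exact fun a => (ihd a).trans (add_assoc a d e ▸ ihe (a + d))
    simpa using translate _ h a

theorem zreach_zero_iff {d : P → ℤ} : N.zreach 0 d ↔ d ∈ N.displacements := by
  rw [zreach_iff_sub_mem_displacements, sub_zero]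

theorem mem_displacements_iff {d : P → ℤ} :
    d ∈ N.displacements ↔ ∃ x : T → ℕ, d = ∑ t, x t • N.delta t :=
  AddSubmonoid.mem_closure_range_iff_of_fintype

theorem sum_nsmul_delta_sub_mem_displacements {x y : T → ℕ} (hxy : x ≤ y) :
    ∑ t, y t • N.delta t - ∑ t, x t • N.delta t ∈ N.displacements := by
  rw [mem_displacements_iff, ← Finset.sum_sub_distrib]
  exact ⟨y - x, Finset.sum_congr rfl fun t _ => (sub_nsmul _ (hxy t)).symm⟩

def zreachSet (m : P → ℕ) : Set (P → ℕ) :=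
  {n | N.zreach (fun p => (m p : ℤ)) (fun p => (n p : ℤ))}

theorem zbounded_of_finite {m : P → ℕ}
    (h : (N.zreachSet m).Finite) :
    N.zbounded m := by
  obtain ⟨u, hu⟩ := h.bddAbove
  refine ⟨Finset.univ.sup u, fun m' hm' hnonneg p => ?_⟩
  lift m' to P → ℕ using hnonneg
  exact Int.ofNat_le.2 <| (hu hm' p).trans (Finset.le_sup (Finset.mem_univ p))

theorem exists_pos_zreach_zero_of_infinite {m : P → ℕ}
    (h : (N.zreachSet m).Infinite) :
    ∃ d : P → ℤ, (∀ p, 0 ≤ d p) ∧ d ≠ 0 ∧ N.zreach 0 d := by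
  let g : ℕ → P → ℕ := fun k => (h.natEmbedding _ k : P → ℕ)
  have hg : g.Injective := fun i j hij => (h.natEmbedding _).injective (Subtype.ext hij)
  have hparikh (k : ℕ) : ∃ x : T → ℕ,
      (fun p => (g k p : ℤ)) - (fun p => (m p : ℤ)) = ∑ t, x t • N.delta t :=
    N.mem_displacements_iff.1 (N.zreach_iff_sub_mem_displacements.1 (h.natEmbedding _ k).2)
  choose x hx using hparikh
  obtain ⟨i, j, hij, hle⟩ := wellQuasiOrdered_le fun k => (x k, g k)
  refine ⟨fun p => (g j p : ℤ) - g i p, fun p => sub_nonneg.2 (by exact_mod_cast hle.2 p), ?_, ?_⟩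
  · intro hzero
    refine hij.ne (hg (funext fun p => ?_)).symm
    simpa only [Pi.zero_apply, sub_eq_zero, Nat.cast_inj] using congrFun hzero p
  · rw [zreach_zero_iff]
    convert N.sum_nsmul_delta_sub_mem_displacements hle.1 using 1
    rw [← hx, ← hx]
    ext p
    simp

theorem not_zbounded_of_zreach_zero {d : P → ℤ} (hd : ∀ p, 0 ≤ d p) (hne : d ≠ 0)
    (hreach : N.zreach 0 d) (m : P → ℕ) : ¬ N.zbounded m := by
  rintro ⟨b, hb⟩
  obtain ⟨p, hp⟩ := Function.ne_iff.1 hne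
  have hdp : 1 ≤ d p := lt_of_le_of_ne (hd p) (Ne.symm hp)
  have hpump : N.zreach (fun q => (m q : ℤ)) ((fun q => (m q : ℤ)) + (b + 1) • d) := by
    rw [zreach_iff_sub_mem_displacements, add_sub_cancel_left]
    exact nsmul_mem (N.zreach_zero_iff.1 hreach) _
  have hbound : (m p : ℤ) + (b + 1) • d p ≤ b :=
    hb _ hpump (fun q => add_nonneg (by positivity) (nsmul_nonneg (hd q) _)) p
  rw [nsmul_eq_mul] at hbound
  push_cast at hbound
  nlinarith

end

end PetriNet

theorem stmt1 (N : PetriNet P T) (m : P → ℕ) :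
    ¬ N.zbounded m ↔
      ∃ m' : P → ℤ, (∀ p, 0 ≤ m' p) ∧ m' ≠ 0 ∧ N.zreach (0 : P → ℤ) m' := by
  constructor
  · intro hunb
    exact N.exists_pos_zreach_zero_of_infinite fun hfin => hunb (N.zbounded_of_finite hfin)
  · rintro ⟨d, hd, hne, hreach⟩
    exact N.not_zbounded_of_zreach_zero hd hne hreach m
end

section
/- A marked Petri net (N, m) with N=(P,T,F) is integer unbounded if and only if the linear system ∃x ∈ ℚ≥0^T : Σ_{t∈T} x[t]·Δ(t) > 0 has a solution (where > means componentwise ≥ with at least one strict inequality). -/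
variable {P T : Type} [Fintype P] [Fintype T] [DecidableEq P]

/-!
Integer reachability from `m` produces exactly the markings `m + ∑ₜ c t • Δ(t)` with `c ∈ ℕ^T`.
If infinitely many of them are nonnegative, Dickson's lemma applied to the pairs (count vector,
marking) yields `c ≤ c'` whose markings are ordered and distinct, so `Δ(c' - c)` is semipositive.
Conversely, firing `k` copies of a semipositive count vector keeps every place nonnegative and
makes some place grow at least like `k`. Rational solutions become natural ones by clearing
denominators.
-/

section LinearCombination

variable {ι κ : Type*} [Fintype ι] (v : ι → κ → ℤ)

lemma exists_linearCombination_pos_of_infinite [Finite κ] {m₀ : κ → ℤ} {s : Set (κ → ℤ)}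
    (hs : s.Infinite)
    (hsub : ∀ w ∈ s, 0 ≤ w ∧ ∃ c : ι → ℕ, w = m₀ + Fintype.linearCombination ℕ v c) :
    ∃ c : ι → ℕ, 0 < Fintype.linearCombination ℕ v c := by
  have e : ℕ ↪ s := hs.natEmbedding
  choose c hc using fun n => (hsub _ (e n).2).2
  -- Dickson's lemma, with the nonnegative markings read in `ℕ` through `Int.toNat`.
  obtain ⟨i, j, hij, hle⟩ := wellQuasiOrdered_le fun n => (c n, fun k => ((e n : κ → ℤ) k).toNat)
  have hc_le : c i ≤ c j := (Prod.mk_le_mk.1 hle).1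
  have he_le : (e i : κ → ℤ) ≤ e j := fun k => by
    have h₀ : 0 ≤ (e j : κ → ℤ) k := (hsub _ (e j).2).1 k
    have h₁ : ((e i : κ → ℤ) k).toNat ≤ ((e j : κ → ℤ) k).toNat := (Prod.mk_le_mk.1 hle).2 k
    calc (e i : κ → ℤ) k ≤ ((e i : κ → ℤ) k).toNat := Int.self_le_toNat _
      _ ≤ ((e j : κ → ℤ) k).toNat := by exact_mod_cast h₁
      _ = (e j : κ → ℤ) k := Int.toNat_of_nonneg h₀
  have he_ne : (e i : κ → ℤ) ≠ e j := fun h => hij.ne (e.injective (Subtype.ext h))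
  refine ⟨c j - c i, ?_⟩
  have : Fintype.linearCombination ℕ v (c j - c i) = e j - e i := by
    rw [hc i, hc j, ← add_tsub_cancel_of_le hc_le, map_add, add_tsub_cancel_left]
    abel
  rw [this, sub_pos]
  exact lt_of_le_of_ne he_le he_ne

lemma exists_pos_nat_mul_eq_natCast (x : ι → ℚ) (hx : ∀ i, 0 ≤ x i) :
    ∃ d : ℕ, 0 < d ∧ ∃ c : ι → ℕ, ∀ i, (c i : ℚ) = d * x i := by
  refine ⟨∏ i, (x i).den, Finset.prod_pos fun i _ => (x i).pos, ?_⟩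
  have hdvd : ∀ i, (x i).den ∣ ∏ j, (x j).den :=
    fun i => Finset.dvd_prod_of_mem _ (Finset.mem_univ i)
  choose e he using hdvd
  refine ⟨fun i => e i * (x i).num.toNat, fun i => ?_⟩
  have hnum : ((x i).num.toNat : ℚ) = (x i).num := by
    exact_mod_cast Int.toNat_of_nonneg (Rat.num_nonneg.2 (hx i))
  rw [he i, Nat.cast_mul, Nat.cast_mul, hnum, ← Rat.den_mul_eq_num]
  ring

lemma intCast_linearCombination_apply (c : ι → ℕ) (k : κ) :
    ((Fintype.linearCombination ℕ v c k : ℤ) : ℚ) = ∑ i, (c i : ℚ) * v i k := by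
  simp [Fintype.linearCombination_apply, Finset.sum_apply]

lemma exists_linearCombination_pos_iff_exists_rat :
    (∃ c : ι → ℕ, 0 < Fintype.linearCombination ℕ v c) ↔
      ∃ x : ι → ℚ, (∀ i, 0 ≤ x i) ∧ (∀ k, 0 ≤ ∑ i, x i * v i k) ∧ ∃ k, 0 < ∑ i, x i * v i k := by
  constructor
  · rintro ⟨c, hc⟩
    obtain ⟨hnonneg, k, hk⟩ := Pi.lt_def.1 hc
    refine ⟨fun i => c i, fun i => Nat.cast_nonneg _, fun k => ?_, k, ?_⟩
    · rw [← intCast_linearCombination_apply]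
      exact_mod_cast hnonneg k
    · rw [← intCast_linearCombination_apply]
      exact_mod_cast hk
  · rintro ⟨x, hx, hnonneg, k, hk⟩
    obtain ⟨d, hd, c, hc⟩ := exists_pos_nat_mul_eq_natCast x hx
    have hscale : ∀ k, ((Fintype.linearCombination ℕ v c k : ℤ) : ℚ) = d * ∑ i, x i * v i k := by
      intro k
      simp only [intCast_linearCombination_apply, hc, Finset.mul_sum, mul_assoc]
    refine ⟨c, Pi.lt_def.2 ⟨fun k => ?_, k, ?_⟩⟩
    · have h : (0 : ℚ) ≤ (Fintype.linearCombination ℕ v c k : ℤ) := by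
        rw [hscale]
        exact mul_nonneg d.cast_nonneg (hnonneg k)
      exact_mod_cast h
    · have h : (0 : ℚ) < (Fintype.linearCombination ℕ v c k : ℤ) := by
        rw [hscale]
        exact mul_pos (Nat.cast_pos.2 hd) hk
      exact_mod_cast h

end LinearCombination

namespace PetriNet

variable {P T : Type} [Fintype P] [Fintype T]

def effect (N : PetriNet P T) (t : T) : P → ℤ := fun p => N.post t p - N.pre t p

lemma zfires_iff (N : PetriNet P T) {m m' : P → ℤ} :
    N.zfires m m' ↔ ∃ t, m' = m + N.effect t := by
  simp only [zfires, funext_iff, Pi.add_apply, effect, add_sub_assoc]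

lemma zreach_add_nsmul_effect (N : PetriNet P T) (m : P → ℤ) (t : T) (k : ℕ) :
    N.zreach m (m + k • N.effect t) := by
  induction k with
  | zero => rw [zero_smul, add_zero]; exact .refl
  | succ k ih => exact ih.tail (N.zfires_iff.2 ⟨t, by rw [succ_nsmul, add_assoc]⟩)

lemma zreach_iff (N : PetriNet P T) {m m' : P → ℤ} :
    N.zreach m m' ↔ ∃ c : T → ℕ, m' = m + Fintype.linearCombination ℕ N.effect c := by
  classical
  constructor
  · intro h
    induction h with
    | refl => exact ⟨0, by simp⟩
    | tail _ hstep ih =>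
      obtain ⟨c, rfl⟩ := ih
      obtain ⟨t, rfl⟩ := N.zfires_iff.1 hstep
      refine ⟨c + Pi.single t 1, ?_⟩
      rw [map_add, Fintype.linearCombination_apply_single, one_smul, add_assoc]
  · rintro ⟨c, rfl⟩
    refine Pi.single_induction
      (fun c => ∀ m, N.zreach m (m + Fintype.linearCombination ℕ N.effect c))
      c (fun m => ?_) (fun c d hc hd m => ?_) (fun t k m => ?_) m
    · rw [map_zero, add_zero]; exact .refl
    · rw [map_add, ← add_assoc]; exact (hc m).trans (hd _)
    · simpa using N.zreach_add_nsmul_effect m t k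

lemma zbounded_of_finite_s2 (N : PetriNet P T) (m : P → ℕ)
    (h : {m' | 0 ≤ m' ∧ N.zreach (fun p => (m p : ℤ)) m'}.Finite) : N.zbounded m := by
  obtain ⟨B, hB⟩ := h.bddAbove
  refine ⟨∑ p, (B p).toNat, fun m' hr hnn p => ?_⟩
  calc m' p ≤ B p := hB ⟨hnn, hr⟩ p
    _ ≤ (B p).toNat := Int.self_le_toNat _
    _ ≤ ((∑ p, (B p).toNat : ℕ) : ℤ) := by
      exact_mod_cast Finset.single_le_sum (f := fun p => (B p).toNat) (fun _ _ => Nat.zero_le _)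
        (Finset.mem_univ p)

lemma not_zbounded_of_linearCombination_effect_pos (N : PetriNet P T) (m : P → ℕ) {c : T → ℕ}
    (hc : 0 < Fintype.linearCombination ℕ N.effect c) : ¬ N.zbounded m := by
  rintro ⟨b, hb⟩
  obtain ⟨hnonneg, p, hp⟩ := Pi.lt_def.1 hc
  have hreach := (N.zreach_iff (m := fun p => (m p : ℤ))).2 ⟨(b + 1) • c, rfl⟩
  have hvalue : ∀ q, ((fun p => (m p : ℤ)) + Fintype.linearCombination ℕ N.effect ((b + 1) • c)) q
      = m q + (b + 1) * Fintype.linearCombination ℕ N.effect c q := by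
    intro q
    rw [map_nsmul]
    simp
  have hbound := hb _ hreach (fun q => by
    rw [hvalue]; exact add_nonneg (by positivity) (mul_nonneg (by positivity) (hnonneg q))) p
  rw [hvalue] at hbound
  have : (1 : ℤ) ≤ Fintype.linearCombination ℕ N.effect c p := hp
  nlinarith

end PetriNet

theorem stmt2 (N : PetriNet P T) (m : P → ℕ) :
    ¬ N.zbounded m ↔
      ∃ x : T → ℚ, (∀ t, 0 ≤ x t) ∧
        (∀ p, 0 ≤ ∑ t, x t * ((N.post t p : ℚ) - (N.pre t p : ℚ))) ∧
        (∃ p, 0 < ∑ t, x t * ((N.post t p : ℚ) - (N.pre t p : ℚ))) := by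
  have hcast : ∀ t p, ((N.post t p : ℚ) - (N.pre t p : ℚ)) = ((N.effect t p : ℤ) : ℚ) := by
    simp [PetriNet.effect]
  simp only [hcast, ← exists_linearCombination_pos_iff_exists_rat]
  constructor
  · intro hunbounded
    exact exists_linearCombination_pos_of_infinite N.effect
      (fun hfin => hunbounded (N.zbounded_of_finite_s2 m hfin))
      (fun _ hw => ⟨hw.1, N.zreach_iff.1 hw.2⟩)
  · rintro ⟨c, hc⟩
    exact N.not_zbounded_of_linearCombination_effect_pos m hc
end

section
/- If a workflow net N is not continuously sound, then N is not generalised sound. That is, continuous soundness is a necessary condition for generalised soundness. -/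
variable {P T : Type} [Fintype P] [Fintype T] [DecidableEq P]

structure WorkflowNet (P T : Type) [Fintype P] [Fintype T] extends PetriNet P T where
  i : P
  f : P
  i_ne_f : i ≠ f
  no_into_initial : ∀ t, toPetriNet.post t i = 0
  no_from_final : ∀ t, toPetriNet.pre t f = 0
  place_on_path : ∀ p : P,
    Relation.ReflTransGen toPetriNet.edge (Sum.inl i) (Sum.inl p) ∧
    Relation.ReflTransGen toPetriNet.edge (Sum.inl p) (Sum.inl f)
  trans_on_path : ∀ t : T,
    Relation.ReflTransGen toPetriNet.edge (Sum.inl i) (Sum.inr t) ∧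
    Relation.ReflTransGen toPetriNet.edge (Sum.inr t) (Sum.inl f)

/-- `k`-soundness of a workflow net. -/
def WorkflowNet.ksound (N : WorkflowNet P T) (k : ℕ) : Prop :=
  ∀ m, N.toPetriNet.reach (mk1 N.i k) m → N.toPetriNet.reach m (mk1 N.f k)

/-- Continuous soundness of a workflow net. -/
def WorkflowNet.csound (N : WorkflowNet P T) : Prop :=
  ∀ m : P → ℚ, N.toPetriNet.creach (mkQ N.i 1) m → N.toPetriNet.creach m (mkQ N.f 1)

/-!
A continuous run from `{i:1}` to `m` uses finitely many rational step sizes, so after multiplying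
everything by a common denominator `b` it becomes a discrete run from `{i:b}` to `b·m`. If `N` were
`b`-sound, `b·m` would reach `{f:b}`, and dividing that discrete run by `b` (each firing becomes a
continuous firing with factor `1/b`) shows that `m` continuously reaches `{f:1}`.
-/

theorem Rat.exists_natCast_eq_mul_of_den_dvd {q : ℚ} (hq : 0 ≤ q) {b : ℕ} (hb : q.den ∣ b) :
    ∃ n : ℕ, (n : ℚ) = b * q := by
  obtain ⟨c, rfl⟩ := hb
  refine ⟨c * q.num.toNat, ?_⟩
  have hnum : ((q.num.toNat : ℕ) : ℚ) = q.num := by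
    exact_mod_cast Int.toNat_of_nonneg (Rat.num_nonneg.mpr hq)
  rw [Nat.cast_mul, hnum, ← Rat.mul_den_eq_num]
  push_cast
  ring

theorem exists_natCast_eq_mul {P : Type} [Fintype P] (x : P → ℚ) (hx : ∀ p, 0 ≤ x p) :
    ∃ b : ℕ, 0 < b ∧ ∃ m : P → ℕ, ∀ p, (m p : ℚ) = b * x p := by
  have hdvd (p : P) : (x p).den ∣ ∏ q, (x q).den := Finset.dvd_prod_of_mem _ (Finset.mem_univ p)
  choose m hm using fun p => Rat.exists_natCast_eq_mul_of_den_dvd (hx p) (hdvd p)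
  exact ⟨_, Finset.prod_pos fun p _ => (x p).pos, m, hm⟩

namespace PetriNet

variable {P T : Type} [Fintype P] [Fintype T] (N : PetriNet P T)

theorem reach_of_fire_mul (t : T) (k : ℕ) {m m' : P → ℕ} (hen : ∀ p, k * N.pre t p ≤ m p)
    (h : ∀ p, m' p + k * N.pre t p = m p + k * N.post t p) : N.reach m m' := by
  induction k generalizing m with
  | zero =>
    obtain rfl : m = m' := funext fun p => by simpa using (h p).symm
    exact .refl
  | succ k ih =>
    simp only [Nat.succ_mul] at hen h
    refine .head (b := fun p => m p + N.post t p - N.pre t p) ⟨t, fun p => ?_, fun p => rfl⟩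
      (ih (fun p => ?_) fun p => ?_)
    all_goals have := hen p; have := h p; omega

variable {N}

theorem reach_nsmul_of_fires (c : ℕ) {m m' : P → ℕ} (h : N.fires m m') :
    N.reach (c • m) (c • m') := by
  obtain ⟨t, hen, hm'⟩ := h
  refine N.reach_of_fire_mul t c (fun p => Nat.mul_le_mul_left c (hen p)) fun p => ?_
  have : m' p + N.pre t p = m p + N.post t p := by
    have := hen p; have := hm' p; omega
  simp only [Pi.smul_apply, smul_eq_mul, ← Nat.mul_add, this]

theorem reach.nsmul {m m' : P → ℕ} (h : N.reach m m') (c : ℕ) :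
    N.reach (c • m) (c • m') :=
  Relation.ReflTransGen.lift' (fun m => c • m) (fun _ _ => reach_nsmul_of_fires c) _ _ h

theorem cfires_of_fires {c : ℕ} (hc : 0 < c) {m m' : P → ℕ} (h : N.fires m m') :
    N.cfires (fun p => m p / c) (fun p => m' p / c) := by
  obtain ⟨t, hen, hm'⟩ := h
  have hcq : (0 : ℚ) < c := by exact_mod_cast hc
  refine ⟨t, 1 / c, by positivity, (div_le_one hcq).mpr (by exact_mod_cast hc), fun p => ?_,
    fun p => ?_⟩
  · rw [one_div_mul_eq_div]
    exact div_le_div_of_nonneg_right (by exact_mod_cast hen p) hcq.le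
  · have : (m' p : ℚ) = m p + N.post t p - N.pre t p := by
      rw [hm' p, Nat.cast_sub (by have := hen p; omega)]
      push_cast
      ring
    simp only [this]
    ring

theorem creach_of_reach {c : ℕ} (hc : 0 < c) {m m' : P → ℕ} {x y : P → ℚ}
    (hm : ∀ p, (m p : ℚ) = c * x p) (hm' : ∀ p, (m' p : ℚ) = c * y p) (h : N.reach m m') :
    N.creach x y := by
  have hcq : (c : ℚ) ≠ 0 := by exact_mod_cast hc.ne'
  have hx : x = fun p => (m p : ℚ) / c := funext fun p => by rw [hm p]; field_simp
  have hy : y = fun p => (m' p : ℚ) / c := funext fun p => by rw [hm' p]; field_simp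
  rw [hx, hy]
  exact Relation.ReflTransGen.lift _ (fun _ _ => cfires_of_fires hc) _ _ h

/-- A continuous step by `l` becomes, after scaling by `den l`, `b * num l` discrete firings. -/
theorem cfires.exists_reach {x y : P → ℚ} (h : N.cfires x y) {b : ℕ} {m : P → ℕ}
    (hm : ∀ p, (m p : ℚ) = b * x p) :
    ∃ d : ℕ, 0 < d ∧ ∃ m' : P → ℕ,
      (∀ p, (m' p : ℚ) = (b * d : ℕ) * y p) ∧ N.reach (d • m) m' := by
  obtain ⟨t, l, hl, -, hpre, hy⟩ := h
  obtain ⟨k, hk⟩ := Rat.exists_natCast_eq_mul_of_den_dvd hl.le (dvd_refl l.den)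
  have hen (p : P) : b * k * N.pre t p ≤ l.den * m p := by
    suffices ((b * k * N.pre t p : ℕ) : ℚ) ≤ (l.den * m p : ℕ) by exact_mod_cast this
    push_cast
    rw [hk, hm p]
    calc (b : ℚ) * (l.den * l) * N.pre t p = b * l.den * (l * N.pre t p) := by ring
      _ ≤ b * l.den * x p := by gcongr; exact hpre p
      _ = l.den * (b * x p) := by ring
  refine ⟨l.den, l.pos, fun p => l.den * m p + b * k * N.post t p - b * k * N.pre t p,
    fun p => ?_, N.reach_of_fire_mul t (b * k) hen fun p => ?_⟩
  · rw [Nat.cast_sub (le_add_right (hen p)), hy p]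
    push_cast
    rw [hk, hm p]
    ring
  · have := hen p
    simp only [Pi.smul_apply, smul_eq_mul]
    omega

theorem creach.exists_reach {x y : P → ℚ} (h : N.creach x y) (hx : ∀ p, 0 ≤ x p) :
    ∃ b : ℕ, 0 < b ∧ ∃ m m' : P → ℕ,
      (∀ p, (m p : ℚ) = b * x p) ∧ (∀ p, (m' p : ℚ) = b * y p) ∧ N.reach m m' := by
  induction h with
  | refl =>
    obtain ⟨b, hb, m, hm⟩ := exists_natCast_eq_mul x hx
    exact ⟨b, hb, m, m, hm, hm, .refl⟩
  | tail _ hstep ih =>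
    obtain ⟨b, hb, m, m', hm, hm', hreach⟩ := ih
    obtain ⟨d, hd, m'', hm'', hreach'⟩ := hstep.exists_reach hm'
    refine ⟨b * d, Nat.mul_pos hb hd, d • m, m'', fun p => ?_, hm'',
      (hreach.nsmul d).trans hreach'⟩
    simp only [Pi.smul_apply, smul_eq_mul]
    push_cast
    rw [hm p]
    ring

end PetriNet

theorem natCast_mk1 {P : Type} [DecidableEq P] (p : P) (k : ℕ) (q : P) :
    (mk1 p k q : ℚ) = k * mkQ p 1 q := by
  unfold mk1 mkQ
  split_ifs <;> simp

theorem stmt3 (N : WorkflowNet P T) (h : ¬ N.csound) :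
    ¬ ∀ k : ℕ, 1 ≤ k → N.ksound k := by
  intro hsound
  obtain ⟨m, hreach, hnot⟩ : ∃ m, N.creach (mkQ N.i 1) m ∧ ¬ N.creach m (mkQ N.f 1) := by
    simpa [WorkflowNet.csound] using h
  have hinit : ∀ p, 0 ≤ mkQ N.i (1 : ℚ) p := fun p => by unfold mkQ; split_ifs <;> norm_num
  obtain ⟨b, hb, m₀, m₁, hm₀, hm₁, hreach'⟩ := hreach.exists_reach hinit
  obtain rfl : m₀ = mk1 N.i b :=
    funext fun p => Nat.cast_injective (R := ℚ) (by rw [hm₀, natCast_mk1])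
  exact hnot (PetriNet.creach_of_reach hb hm₁ (natCast_mk1 N.f b) (hsound b hb m₁ hreach'))
end

section
/- Let N be a free-choice Petri net and m a marking. Then there exists a marking m' reachable from m such that the set of live transitions at m' equals the set of quasi-live transitions at m'. -/
variable {P T : Type} [Fintype P] [Fintype T] [DecidableEq P]

lemma quasiLive_mono (N : PetriNet P T) {m m' : P → ℕ} (h : N.reach m m') {t : T}
    (hq : N.quasiLive m' t) : N.quasiLive m t := by
  obtain ⟨m'', h2, he⟩ := hq
  exact ⟨m'', h.trans h2, he⟩

lemma stmt4_aux (N : PetriNet P T) :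
    ∀ n (m : P → ℕ), {t | N.quasiLive m t}.ncard ≤ n →
    ∃ m', N.reach m m' ∧ ∀ t, N.live m' t ↔ N.quasiLive m' t := by
  intro n
  induction n with
  | zero =>
    intro m h
    refine ⟨m, Relation.ReflTransGen.refl, fun t => ⟨fun hl => hl m Relation.ReflTransGen.refl, fun hq => ?_⟩⟩
    exfalso
    have hempty : {t | N.quasiLive m t} = ∅ :=
      (Set.ncard_eq_zero (Set.toFinite _)).mp (Nat.le_zero.mp h)
    exact absurd (hempty ▸ hq : t ∈ (∅ : Set T)) (Set.notMem_empty t)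
  | succ n ih =>
    intro m h
    by_cases hq : ∀ t, N.quasiLive m t → N.live m t
    · exact ⟨m, Relation.ReflTransGen.refl,
        fun t => ⟨fun hl => hl m Relation.ReflTransGen.refl, hq t⟩⟩
    · push_neg at hq
      obtain ⟨t, hqt, hnl⟩ := hq
      unfold PetriNet.live at hnl
      push_neg at hnl
      obtain ⟨m', hr, hnq⟩ := hnl
      have hss : {s | N.quasiLive m' s} ⊂ {s | N.quasiLive m s} := by
        constructor
        · intro s hs; exact quasiLive_mono N hr hs
        · intro hsub
          exact hnq (hsub hqt)
      have hlt : {s | N.quasiLive m' s}.ncard < {s | N.quasiLive m s}.ncard :=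
        Set.ncard_lt_ncard hss (Set.toFinite _)
      obtain ⟨m'', hr', hiff⟩ := ih m' (Nat.lt_succ_iff.mp (lt_of_lt_of_le hlt h))
      exact ⟨m'', hr.trans hr', hiff⟩

theorem stmt4 (N : PetriNet P T) (hfc : N.freeChoice) (m : P → ℕ) :
    ∃ m', N.reach m m' ∧ ∀ t, N.live m' t ↔ N.quasiLive m' t :=
  stmt4_aux N {t | N.quasiLive m t}.ncard m le_rfl
end

section
/- Let N be a free-choice workflow net, c ≥ 1, and m a marking with L(c·m) = F(c·m). If c·m reaches {f:c} and (N, c·m) is bounded, then m = {f:1}. -/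
variable {P T : Type} [Fintype P] [Fintype T] [DecidableEq P]

theorem stmt6 (N : WorkflowNet P T) (hfc : N.toPetriNet.freeChoice) (c : ℕ) (hc : 1 ≤ c)
    (m : P → ℕ)
    (hLF : ∀ t, N.toPetriNet.live (fun p => c * m p) t ↔
      N.toPetriNet.quasiLive (fun p => c * m p) t)
    (hreach : N.toPetriNet.reach (fun p => c * m p) (mk1 N.f c))
    (hb : N.toPetriNet.bounded (fun p => c * m p)) :
    m = mk1 N.f 1 := by
  -- Every transition consumes from some place other than f
  have hA : ∀ t, ∃ p, p ≠ N.f ∧ 0 < N.toPetriNet.pre t p := by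
    intro t
    obtain ⟨h1, _⟩ := N.trans_on_path t
    rcases Relation.ReflTransGen.cases_tail h1 with h | ⟨b, _, he⟩
    · exact absurd h (by simp)
    · cases b with
      | inl p =>
        refine ⟨p, ?_, he⟩
        rintro rfl
        have := N.no_from_final t
        have he' : 0 < N.toPetriNet.pre t N.f := he
        omega
      | inr s => exact absurd he (by simp [PetriNet.edge])
  -- mk1 f c is dead
  have hdead : ∀ t, ¬ N.toPetriNet.enabled t (mk1 N.f c) := by
    intro t ht
    obtain ⟨p, hp, hpos⟩ := hA t
    have := ht p
    simp [mk1, hp] at this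
    omega
  have hC : ∀ m', N.toPetriNet.reach (mk1 N.f c) m' → m' = mk1 N.f c := by
    intro m' h
    rcases Relation.ReflTransGen.cases_head h with h | ⟨b, ⟨t, ht, _⟩, _⟩
    · exact h.symm
    · exact absurd ht (hdead t)
  have hD : (fun p => c * m p) = mk1 N.f c := by
    rcases Relation.ReflTransGen.cases_head hreach with h | ⟨b, ⟨t, ht, _⟩, _⟩
    · exact h
    · exfalso
      have hq : N.toPetriNet.quasiLive (fun p => c * m p) t :=
        ⟨_, Relation.ReflTransGen.refl, ht⟩
      have hl := (hLF t).mpr hq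
      obtain ⟨m'', hr, he⟩ := hl _ hreach
      rw [hC m'' hr] at he
      exact hdead t he
  funext p
  have hp := congrFun hD p
  simp only [mk1] at hp ⊢
  by_cases h : p = N.f
  · simp only [h, if_true] at hp ⊢
    have : c * m N.f = c * 1 := by simpa using hp
    exact Nat.eq_of_mul_eq_mul_left (by omega) this
  · simp only [h, if_false] at hp ⊢
    rcases Nat.mul_eq_zero.mp hp with h0 | h0
    · omega
    · exact h0
end

section
/- If a workflow net N is continuously sound, then for every k ≥ 1 the marked net (N, {i:k}) is bounded. -/
variable {P T : Type} [Fintype P] [Fintype T] [DecidableEq P]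

section

omit [DecidableEq P]

namespace PetriNet

variable (N : PetriNet P T)

theorem bounded_of_finite_reach {m₀ : P → ℕ} (hfin : {m | N.reach m₀ m}.Finite) :
    N.bounded m₀ := by
  obtain ⟨u, hu⟩ := hfin.bddAbove
  exact ⟨Finset.univ.sup u, fun m hm p => (hu hm p).trans (Finset.le_sup (Finset.mem_univ p))⟩

theorem creach_mul_of_reach {q : ℚ} (hq₀ : 0 < q) (hq₁ : q ≤ 1) {m m' : P → ℕ}
    (h : N.reach m m') : N.creach (fun p => q * m p) (fun p => q * m' p) := by
  induction h with
  | refl => exact .refl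
  | @tail b c _ hbc ih =>
    obtain ⟨t, hen, hc⟩ := hbc
    refine ih.tail ⟨t, q, hq₀, hq₁, fun p => ?_, fun p => ?_⟩
    · exact mul_le_mul_of_nonneg_left (by exact_mod_cast hen p) hq₀.le
    · have : (c p : ℚ) = b p + N.post t p - N.pre t p := by
        rw [hc p, Nat.cast_sub ((hen p).trans (Nat.le_add_right _ _)), Nat.cast_add]
      simp only [this]
      ring

theorem creach_add_right {x y : P → ℚ} (h : N.creach x y) {z : P → ℚ} (hz : 0 ≤ z) :
    N.creach (x + z) (y + z) := by
  induction h with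
  | refl => exact .refl
  | @tail b c _ hbc ih =>
    obtain ⟨t, l, hl₀, hl₁, hen, hc⟩ := hbc
    refine ih.tail ⟨t, l, hl₀, hl₁, fun p => ?_, fun p => ?_⟩
    · simpa using (hen p).trans (le_add_of_nonneg_right (hz p))
    · simp only [Pi.add_apply, hc p]
      ring

end PetriNet

namespace WorkflowNet

variable (N : WorkflowNet P T)

theorem exists_post_pos (t : T) : ∃ p, 0 < N.post t p := by
  rcases Relation.ReflTransGen.cases_head (N.trans_on_path t).2 with h | ⟨(p | _), hp, -⟩
  · cases h
  · exact ⟨p, hp⟩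
  · exact hp.elim

theorem final_le_of_cfires {x y : P → ℚ} (h : N.cfires x y) : x N.f ≤ y N.f := by
  obtain ⟨t, l, hl₀, -, -, hy⟩ := h
  rw [hy, N.no_from_final, Nat.cast_zero, sub_zero]
  have : 0 ≤ l * N.post t N.f := by positivity
  linarith

theorem final_le_of_creach {x y : P → ℚ} (h : N.creach x y) : x N.f ≤ y N.f := by
  induction h with
  | refl => exact le_rfl
  | tail _ hbc ih => exact ih.trans (N.final_le_of_cfires hbc)

end WorkflowNet

end

namespace WorkflowNet

variable (N : WorkflowNet P T)

/-- The last step of a run ending in `{f:1}` produces a token, necessarily in `f`. -/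
theorem final_lt_one_of_cfires {x : P → ℚ} (h : N.cfires x (mkQ N.f 1)) : x N.f < 1 := by
  obtain ⟨t, l, hl₀, -, hen, hy⟩ := h
  obtain ⟨p, hp⟩ := N.exists_post_pos t
  have hlp : 0 < l * N.post t p := mul_pos hl₀ (by exact_mod_cast hp)
  have hyp : 0 < mkQ N.f 1 p := by
    rw [hy]
    linarith [hen p]
  have hpf : p = N.f := by
    by_contra hpf
    simp [mkQ, hpf] at hyp
  subst hpf
  have := hy N.f
  simp only [mkQ, ↓reduceIte, N.no_from_final, Nat.cast_zero, sub_zero] at this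
  linarith

theorem eq_of_creach_final {x : P → ℚ} (h : N.creach x (mkQ N.f 1)) (hx : 1 ≤ x N.f) :
    x = mkQ N.f 1 := by
  rcases Relation.ReflTransGen.cases_tail h with h | ⟨c, hc, hlast⟩
  · exact h.symm
  · have := (N.final_le_of_creach hc).trans_lt (N.final_lt_one_of_cfires hlast)
    linarith

theorem creach_inv_mul_of_reach_initial {k : ℕ} (hk : 1 ≤ k) {m : P → ℕ}
    (h : N.reach (mk1 N.i k) m) : N.creach (mkQ N.i 1) (fun p => (k : ℚ)⁻¹ * m p) := by
  have hk₀ : (k : ℚ) ≠ 0 := by positivity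
  have hinit : (fun p => (k : ℚ)⁻¹ * mk1 N.i k p) = mkQ N.i 1 := by
    funext p
    by_cases hp : p = N.i <;> simp [mk1, mkQ, hp, hk₀]
  have hk₁ : (k : ℚ)⁻¹ ≤ 1 := inv_le_one_of_one_le₀ (by exact_mod_cast hk)
  exact hinit ▸ N.creach_mul_of_reach (by positivity) hk₁ h

theorem isAntichain_reach (hN : N.csound) {k : ℕ} (hk : 1 ≤ k) :
    IsAntichain (· ≤ ·) {m | N.reach (mk1 N.i k) m} := by
  intro a ha b hb hne hab
  set A : P → ℚ := fun p => (k : ℚ)⁻¹ * a p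
  set B : P → ℚ := fun p => (k : ℚ)⁻¹ * b p
  have hA : N.creach (mkQ N.i 1) A := N.creach_inv_mul_of_reach_initial hk ha
  have hB : N.creach (mkQ N.i 1) B := N.creach_inv_mul_of_reach_initial hk hb
  have hδ : 0 ≤ B - A := fun p => by
    simpa [A, B, sub_nonneg] using mul_le_mul_of_nonneg_left (by exact_mod_cast hab p)
      (inv_nonneg.2 (Nat.cast_nonneg k))
  have hexcess : N.creach (mkQ N.i 1) (mkQ N.f 1 + (B - A)) := by
    have := N.creach_add_right (hN A hA) hδ
    rw [add_sub_cancel] at this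
    exact hB.trans this
  have hfinal := N.eq_of_creach_final (hN _ hexcess) (by simpa [mkQ] using hδ N.f)
  refine hne (funext fun p => ?_)
  have := congrFun hfinal p
  have hk₀ : (k : ℚ) ≠ 0 := by positivity
  simp [A, B, hk₀, sub_eq_zero] at this
  exact_mod_cast this.symm

end WorkflowNet

theorem stmt7 (N : WorkflowNet P T) (h : N.csound) :
    ∀ k : ℕ, 1 ≤ k → N.toPetriNet.bounded (mk1 N.i k) := fun _ hk =>
  N.bounded_of_finite_reach (WellQuasiOrderedLE.finite_of_isAntichain (N.isAntichain_reach h hk))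
end

section
/- Let N=(P,T,F) be a Petri net and m, m' ∈ ℕ^P. Then m structurally reaches m' (i.e., k·m →* k·m' for some positive integer k) if and only if m continuously reaches m'. -/
variable {P T : Type} [Fintype P] [Fintype T] [DecidableEq P]

section Aux

variable {P T : Type} [Fintype P] [Fintype T] [DecidableEq P]

lemma fire_pow (N : PetriNet P T) (t : T) :
    ∀ (c : ℕ) (n : P → ℕ), (∀ p, c * N.pre t p ≤ n p) →
      N.reach n (fun p => n p + c * N.post t p - c * N.pre t p) := by
  intro c
  induction c with
  | zero =>
    intro n _
    have : (fun p => n p + 0 * N.post t p - 0 * N.pre t p) = n := by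
      funext p; simp
    rw [this]
    exact Relation.ReflTransGen.refl
  | succ c ih =>
    intro n hn
    have hen : N.enabled t n := by
      intro p
      have := hn p
      have h2 : (c+1) * N.pre t p = c * N.pre t p + N.pre t p := by ring
      omega
    set n1 : P → ℕ := fun p => n p + N.post t p - N.pre t p with hn1
    have hfires : N.fires n n1 := ⟨t, hen, fun p => rfl⟩
    have hle : ∀ p, c * N.pre t p ≤ n1 p := by
      intro p
      have := hn p
      have h2 : (c+1) * N.pre t p = c * N.pre t p + N.pre t p := by ring
      simp only [hn1]
      omega
    have := ih n1 hle
    have heq : (fun p => n1 p + c * N.post t p - c * N.pre t p)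
        = (fun p => n p + (c+1) * N.post t p - (c+1) * N.pre t p) := by
      funext p
      have := hn p
      have h2 : (c+1) * N.pre t p = c * N.pre t p + N.pre t p := by ring
      have h3 : (c+1) * N.post t p = c * N.post t p + N.post t p := by ring
      simp only [hn1]
      omega
    rw [heq] at this
    exact Relation.ReflTransGen.head hfires this

lemma reach_scale (N : PetriNet P T) (b : ℕ) {n n' : P → ℕ} (h : N.reach n n') :
    N.reach (fun p => b * n p) (fun p => b * n' p) := by
  induction h with
  | refl => exact Relation.ReflTransGen.refl
  | tail _ step ih =>
    rename_i x y _
    obtain ⟨t, hen, heq⟩ := step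
    have hle : ∀ p, b * N.pre t p ≤ b * x p := fun p =>
      Nat.mul_le_mul_left b (hen p)
    have := fire_pow N t b (fun p => b * x p) hle
    have heq2 : (fun p => (fun p => b * x p) p + b * N.post t p - b * N.pre t p)
        = (fun p => b * y p) := by
      funext p
      show b * x p + b * N.post t p - b * N.pre t p = b * y p
      have h1 := heq p
      have h2 := hen p
      have h3 : b * y p = b * x p + b * N.post t p - b * N.pre t p := by
        rw [h1]
        rw [Nat.mul_sub, Nat.mul_add]
      omega
    rw [heq2] at this
    exact Relation.ReflTransGen.trans ih this

lemma creach_to_reach (N : PetriNet P T) (m : P → ℕ) (y : P → ℚ)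
    (h : N.creach (fun p => (m p : ℚ)) y) :
    ∃ (k : ℕ) (ny : P → ℕ), 0 < k ∧ (∀ p, (ny p : ℚ) = k * y p) ∧
      N.reach (fun p => k * m p) ny := by
  induction h with
  | refl =>
    refine ⟨1, m, one_pos, fun p => by push_cast; ring, ?_⟩
    have : (fun p => 1 * m p) = m := funext fun p => one_mul _
    rw [this]
    exact Relation.ReflTransGen.refl
  | tail _ step ih =>
    rename_i y z _
    obtain ⟨k, ny, hk, hny, hreach⟩ := ih
    obtain ⟨t, l, hl0, hl1, hen, heq⟩ := step
    have hlden : (0:ℚ) < (l.den : ℚ) := by positivity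
    have hlnum : 0 < l.num := Rat.num_pos.mpr hl0
    set c : ℕ := k * l.num.toNat with hc
    have hcast : (c : ℚ) = (k : ℚ) * (l.den : ℚ) * l := by
      have hml : (l.den : ℚ) * l = (l.num : ℚ) := by
        rw [mul_comm]; exact_mod_cast Rat.mul_den_eq_num l
      have h4 : ((l.num.toNat : ℕ) : ℚ) = ((l.num : ℤ) : ℚ) := by
        exact_mod_cast Int.toNat_of_nonneg hlnum.le
      rw [hc, mul_assoc, hml]
      push_cast [h4]
      ring
    -- enabledness for fire_pow
    have henq : ∀ p, (c : ℚ) * (N.pre t p : ℚ) ≤ (l.den : ℚ) * (ny p : ℚ) := by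
      intro p
      rw [hcast, hny p]
      have := hen p
      calc (k:ℚ) * l.den * l * N.pre t p = (l.den:ℚ) * ((k:ℚ) * (l * N.pre t p)) := by ring
        _ ≤ (l.den:ℚ) * ((k:ℚ) * y p) := by
            apply mul_le_mul_of_nonneg_left _ hlden.le
            apply mul_le_mul_of_nonneg_left (hen p) (by positivity)
        _ = (l.den:ℚ) * ((k:ℚ) * y p) := rfl
    have henn : ∀ p, c * N.pre t p ≤ l.den * ny p := by
      intro p
      have := henq p
      exact_mod_cast this
    refine ⟨k * l.den, fun p => l.den * ny p + c * N.post t p - c * N.pre t p,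
      Nat.mul_pos hk l.pos, ?_, ?_⟩
    · intro p
      have hsub : (↑(l.den * ny p + c * N.post t p - c * N.pre t p) : ℚ)
          = (l.den : ℚ) * ny p + c * N.post t p - c * N.pre t p := by
        have h1 : c * N.pre t p ≤ l.den * ny p + c * N.post t p := by
          have := henn p; omega
        push_cast [Nat.cast_sub h1]
        ring
      rw [hsub, hny p, heq p, hcast]
      push_cast
      ring
    · have h1 : N.reach (fun p => (k * l.den) * m p) (fun p => l.den * ny p) := by
        have := reach_scale N l.den hreach
        have he : (fun p => l.den * (k * m p)) = (fun p => (k * l.den) * m p) := by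
          funext p; ring
        rwa [he] at this
      have h2 := fire_pow N t c (fun p => l.den * ny p) henn
      exact Relation.ReflTransGen.trans h1 h2

lemma reach_to_creach (N : PetriNet P T) (k : ℕ) (hk : 0 < k) {n n' : P → ℕ}
    (h : N.reach n n') :
    N.creach (fun p => (n p : ℚ) / k) (fun p => (n' p : ℚ) / k) := by
  have hkq : (0:ℚ) < (k:ℚ) := by positivity
  induction h with
  | refl => exact Relation.ReflTransGen.refl
  | tail _ step ih =>
    rename_i x y _
    obtain ⟨t, hen, heq⟩ := step
    refine Relation.ReflTransGen.tail ih ⟨t, (k:ℚ)⁻¹, by positivity, ?_, ?_, ?_⟩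
    · rw [inv_le_one_iff₀]
      right
      exact_mod_cast hk
    · intro p
      show (k:ℚ)⁻¹ * (N.pre t p : ℚ) ≤ (x p : ℚ) / k
      rw [div_eq_mul_inv, mul_comm ((x p : ℚ)) _]
      apply mul_le_mul_of_nonneg_left _ (by positivity)
      exact_mod_cast hen p
    · intro p
      have h1 := heq p
      have h2 := hen p
      have h3 : (y p : ℚ) = (x p : ℚ) + N.post t p - N.pre t p := by
        rw [h1]
        push_cast [Nat.cast_sub (by omega : N.pre t p ≤ x p + N.post t p)]
        ring
      field_simp
      rw [h3]
      ring

end Aux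

theorem stmt9 (N : PetriNet P T) (m m' : P → ℕ) :
    (∃ k : ℕ, 0 < k ∧ N.reach (fun p => k * m p) (fun p => k * m' p)) ↔
      N.creach (fun p => (m p : ℚ)) (fun p => (m' p : ℚ)) := by
  constructor
  · rintro ⟨k, hk, hr⟩
    have := reach_to_creach N k hk hr
    have hkq : ((k:ℚ)) ≠ 0 := by positivity
    have e1 : (fun p => ((k * m p : ℕ) : ℚ) / k) = (fun p => (m p : ℚ)) := by
      funext p; push_cast; field_simp
    have e2 : (fun p => ((k * m' p : ℕ) : ℚ) / k) = (fun p => (m' p : ℚ)) := by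
      funext p; push_cast; field_simp
    rwa [e1, e2] at this
  · intro h
    obtain ⟨k, ny, hk, hny, hreach⟩ := creach_to_reach N m _ h
    have : ny = fun p => k * m' p := by
      funext p
      have := hny p
      exact_mod_cast this
    rw [this] at hreach
    exact ⟨k, hk, hreach⟩
end

section
/- Let N be a Petri net and N⁻¹ the net obtained by reversing all transitions (swapping pre- and post-vectors). Then for all continuous markings m, m': m continuously reaches m' in N if and only if m' continuously reaches m in N⁻¹. Consequently, a workflow net N is continuously sound if and only if the continuous reachability set of {i:1} in N is included in the continuous reachability set of {f:1} in N⁻¹. -/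
variable {P T : Type} [Fintype P] [Fintype T] [DecidableEq P]

/-- The Petri net obtained by reversing all transitions. -/
def PetriNet.rev (N : PetriNet P T) : PetriNet P T := ⟨N.post, N.pre⟩


lemma cfires_rev {P T : Type} [Fintype P] [Fintype T] [DecidableEq P]
    (N : PetriNet P T) (m m' : P → ℚ) (h : N.cfires m m') : N.rev.cfires m' m := by
  obtain ⟨t, l, hl0, hl1, hen, hupd⟩ := h
  refine ⟨t, l, hl0, hl1, fun p => ?_, fun p => ?_⟩
  · have := hen p; have h2 := hupd p
    simp only [PetriNet.rev] at *
    nlinarith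
  · have := hupd p
    simp only [PetriNet.rev]
    linarith

lemma creach_rev {P T : Type} [Fintype P] [Fintype T] [DecidableEq P]
    (N : PetriNet P T) (m m' : P → ℚ) : N.creach m m' ↔ N.rev.creach m' m := by
  have key : ∀ (M : PetriNet P T) (a b : P → ℚ), M.creach a b → M.rev.creach b a := by
    intro M a b h
    induction h with
    | refl => exact Relation.ReflTransGen.refl
    | tail _ hf ih => exact Relation.ReflTransGen.head (cfires_rev M _ _ hf) ih
  constructor
  · exact key N m m'
  · intro h
    have := key N.rev m' m h
    simpa [PetriNet.rev] using this

theorem stmt15 :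
    (∀ (N : PetriNet P T) (m m' : P → ℚ), N.creach m m' ↔ N.rev.creach m' m) ∧
    (∀ N : WorkflowNet P T,
      N.csound ↔ ∀ m : P → ℚ, N.toPetriNet.creach (mkQ N.i 1) m →
        N.toPetriNet.rev.creach (mkQ N.f 1) m) := by
  refine ⟨fun N m m' => creach_rev N m m', fun N => ?_⟩
  constructor
  · intro hs m hm
    exact (creach_rev _ _ _).mp (hs m hm)
  · intro h m hm
    exact (creach_rev _ _ _).mpr (h m hm)
end

section
/- Let N be a workflow net in which every transition has a nonempty post-set and no transition consumes from the final place f. If m' > 0 (i.e., m' is componentwise nonnegative and not zero), then {f:k} + m' cannot reach {f:k} for any k. -/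
variable {P T : Type} [Fintype P] [Fintype T] [DecidableEq P]

theorem stmt18 (N : WorkflowNet P T)
    (hpost : ∀ t, ∃ p, 0 < N.toPetriNet.post t p)
    (m' : P → ℕ) (hm' : m' ≠ 0) :
    ∀ k : ℕ, ¬ N.toPetriNet.reach (fun p => mk1 N.f k p + m' p) (mk1 N.f k) := by
  intro k hreach
  set Inv : (P → ℕ) → Prop :=
    fun m => k ≤ m N.f ∧ (k < m N.f ∨ ∃ p, p ≠ N.f ∧ 0 < m p) with hInv
  have step : ∀ m m'', Inv m → N.toPetriNet.fires m m'' → Inv m'' := by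
    rintro m m'' ⟨hf, _⟩ ⟨t, hen, heq⟩
    have hf' : k ≤ m'' N.f := by
      rw [heq, N.no_from_final]
      omega
    refine ⟨hf', ?_⟩
    obtain ⟨q, hq⟩ := hpost t
    by_cases hqf : q = N.f
    · left
      rw [heq, N.no_from_final]
      subst hqf
      omega
    · right
      refine ⟨q, hqf, ?_⟩
      have := hen q
      rw [heq]
      omega
  have mono : ∀ m₂, N.toPetriNet.reach (fun p => mk1 N.f k p + m' p) m₂ → Inv m₂ := by
    intro m₂ h
    induction h with
    | refl =>
      constructor
      · simp [mk1]
      · rcases Function.ne_iff.mp hm' with ⟨p, hp⟩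
        simp only [Pi.zero_apply] at hp
        by_cases hpf : p = N.f
        · left; subst hpf; simp [mk1]; omega
        · right; exact ⟨p, hpf, by simp [mk1, hpf]; omega⟩
    | tail hab hbc ih => exact step _ _ ih hbc
  have := mono _ hreach
  rcases this with ⟨h1, h2 | ⟨p, hpf, hp⟩⟩
  · simp [mk1] at h2
  · simp [mk1, hpf] at hp
end
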